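/- Let q > 1, let A be a finite nonempty set, let k ≥ 1 and let Q₁, …, Q_k : A → ℝ satisfy 1 + (q−1)·Q_j(a) > 0 for all j and all a ∈ A, and 1 + (q−1)·∑_{j=1}^{k} Q_j(a) ≥ 0 for all a ∈ A. Define a sequence of probability distributions on A by π₁(a) = 1/|A| for all a, and for j = 1, …, k, π_{j+1}(a) = π_j(a)·exp_q(Q_j(a)) / ∑_{b∈A} π_j(b)·exp_q(Q_j(b)). Then there exists a constant Z > 0 such that for every a ∈ A: Z·(π_{k+1}(a))^{q−1} = (exp_q(∑_{j=1}^{k} Q_j(a)))^{q−1} + ∑_{j=2}^{k} (q−1)^j · e_j(Q₁(a), …, Q_k(a)). -/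

import Mathlib

open Finset

/-- The q-exponential: for `q ≠ 1`, `exp_q z = (max(1 + (q-1)z, 0))^(1/(q-1))`. -/
noncomputable def qexp (q z : ℝ) : ℝ := (max (1 + (q - 1) * z) 0) ^ (1 / (q - 1))

/-!
Each step of the iteration multiplies the policy by `exp_q (Q_j a)` and rescales it by a
constant, so `π_{k+1}(a)` is a positive constant times `∏_j exp_q (Q_j a)`. Raising to the power
`q - 1` turns every factor into `1 + (q-1) Q_j(a)`, and expanding this product by the size of the
chosen subset gives `∑_j (q-1)^j e_j(Q_1(a), …, Q_k(a))`. The terms of degree `0` and `1` add up to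
`1 + (q-1) ∑_j Q_j(a) = exp_q(∑_j Q_j(a))^(q-1)`.
-/

theorem qexp_pos {q z : ℝ} (hz : 0 < 1 + (q - 1) * z) : 0 < qexp q z := by
  rw [qexp, max_eq_left hz.le]
  exact Real.rpow_pos_of_pos hz _

theorem qexp_rpow_sub_one {q z : ℝ} (hq : q ≠ 1) (hz : 0 ≤ 1 + (q - 1) * z) :
    qexp q z ^ (q - 1) = 1 + (q - 1) * z := by
  rw [qexp, max_eq_left hz, ← Real.rpow_mul hz, one_div, inv_mul_cancel₀ (sub_ne_zero.2 hq),
    Real.rpow_one]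

namespace Finset

variable {ι R : Type*} [CommSemiring R]

theorem prod_one_add_mul_eq_sum_powersetCard (s : Finset ι) (c : R) (f : ι → R) :
    ∏ i ∈ s, (1 + c * f i)
      = ∑ j ∈ range (#s + 1), c ^ j * ∑ t ∈ s.powersetCard j, ∏ i ∈ t, f i := by
  classical
  rw [prod_one_add, powerset_card_biUnion,
    sum_biUnion fun i _ j _ hij => pairwise_disjoint_powersetCard s hij]
  refine sum_congr rfl fun j _ => ?_
  rw [mul_sum]
  refine sum_congr rfl fun t ht => ?_
  rw [prod_mul_distrib, prod_const, (mem_powersetCard.1 ht).2]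

theorem prod_one_add_mul (s : Finset ι) (c : R) (f : ι → R) :
    ∏ i ∈ s, (1 + c * f i)
      = 1 + c * ∑ i ∈ s, f i
        + ∑ j ∈ Icc 2 #s, c ^ j * ∑ t ∈ s.powersetCard j, ∏ i ∈ t, f i := by
  rw [prod_one_add_mul_eq_sum_powersetCard]
  rcases s.eq_empty_or_nonempty with rfl | hs
  · simp
  obtain ⟨n, hn⟩ := Nat.exists_eq_add_one.2 hs.card_pos
  rw [hn, ← sum_range_add_sum_Ico _ (by omega : 2 ≤ n + 1 + 1), Ico_add_one_right_eq_Icc,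
    sum_range_succ, sum_range_one, powersetCard_one]
  simp [mul_sum]

end Finset

theorem exists_pos_eq_mul_prod_of_reweight {A : Type*} [Fintype A] [Nonempty A]
    (w p : ℕ → A → ℝ) (m : ℕ) (hw : ∀ j, 1 ≤ j → j ≤ m → ∀ a, 0 < w j a)
    (hp : ∀ a, 0 < p 1 a)
    (hrec : ∀ j, 1 ≤ j → j ≤ m → ∀ a, p (j + 1) a = p j a * w j a / ∑ b, p j b * w j b) :
    ∃ C : ℝ, 0 < C ∧ ∀ a, p (m + 1) a = C * p 1 a * ∏ j ∈ Icc 1 m, w j a := by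
  induction m with
  | zero => exact ⟨1, one_pos, fun a => by simp⟩
  | succ n ih =>
    obtain ⟨C, hC, hpC⟩ := ih (fun j h1 h2 => hw j h1 (by omega))
      (fun j h1 h2 => hrec j h1 (by omega))
    have hprod : ∀ a, 0 < ∏ j ∈ Icc 1 (n + 1), w j a := fun a =>
      prod_pos fun j hj => hw j (mem_Icc.1 hj).1 (mem_Icc.1 hj).2 a
    have hnorm : 0 < ∑ b, p (n + 1) b * w (n + 1) b := by
      refine sum_pos (fun b _ => ?_) univ_nonempty
      rw [hpC b, mul_assoc, mul_assoc, ← prod_Icc_succ_top (by omega)]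
      exact mul_pos hC (mul_pos (hp b) (hprod b))
    refine ⟨C / ∑ b, p (n + 1) b * w (n + 1) b, div_pos hC hnorm, fun a => ?_⟩
    rw [hrec (n + 1) (by omega) le_rfl a, hpC a, prod_Icc_succ_top (by omega)]
    ring

theorem tsallisKL_policy_expansion_general {A : Type*} [Fintype A] [Nonempty A]
    (q : ℝ) (hq : 1 < q) (k : ℕ)
    (Q : ℕ → A → ℝ)
    (hQ : ∀ j, 1 ≤ j → j ≤ k → ∀ a, 0 < 1 + (q - 1) * Q j a)
    (hQsum : ∀ a, 0 ≤ 1 + (q - 1) * ∑ j ∈ Finset.Icc 1 k, Q j a)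
    (p : ℕ → A → ℝ)
    (hinit : ∀ a, p 1 a = 1 / (Fintype.card A : ℝ))
    (hrec : ∀ j, 1 ≤ j → j ≤ k → ∀ a,
      p (j + 1) a = p j a * qexp q (Q j a) / ∑ b, p j b * qexp q (Q j b)) :
    ∃ Z : ℝ, 0 < Z ∧ ∀ a,
      Z * (p (k + 1) a) ^ (q - 1)
        = (qexp q (∑ j ∈ Finset.Icc 1 k, Q j a)) ^ (q - 1)
          + ∑ j ∈ Finset.Icc 2 k, (q - 1) ^ j *
              ∑ t ∈ (Finset.Icc 1 k).powersetCard j, ∏ i ∈ t, Q i a := by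
  obtain ⟨C, hC, hp⟩ := exists_pos_eq_mul_prod_of_reweight (fun j a => qexp q (Q j a)) p k
    (fun j h1 h2 a => qexp_pos (hQ j h1 h2 a)) (fun a => by rw [hinit]; positivity) hrec
  have hc : 0 < C * (1 / (Fintype.card A : ℝ)) := by positivity
  refine ⟨((C * (1 / (Fintype.card A : ℝ))) ^ (q - 1))⁻¹, by positivity, fun a => ?_⟩
  have hfactor : ∀ j ∈ Icc 1 k, qexp q (Q j a) ^ (q - 1) = 1 + (q - 1) * Q j a :=
    fun j hj => qexp_rpow_sub_one hq.ne' (hQ j (mem_Icc.1 hj).1 (mem_Icc.1 hj).2 a).le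
  have hnonneg : ∀ j ∈ Icc 1 k, 0 ≤ qexp q (Q j a) :=
    fun j hj => (qexp_pos (hQ j (mem_Icc.1 hj).1 (mem_Icc.1 hj).2 a)).le
  rw [hp a, hinit a, Real.mul_rpow hc.le (prod_nonneg hnonneg), ← mul_assoc,
    inv_mul_cancel₀ (Real.rpow_pos_of_pos hc _).ne', one_mul, ← Real.finsetProd_rpow _ _ hnonneg,
    prod_congr rfl hfactor, prod_one_add_mul, qexp_rpow_sub_one hq.ne' (hQsum a), Nat.card_Icc,
    Nat.add_sub_cancel]

/-- Tsallis KL regularized policies do more than averaging: starting from the uniform policy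
`π₁(a) = 1/|A|` and iterating `π_{j+1}(a) = π_j(a)·exp_q(Q_j(a)) / ∑_b π_j(b)·exp_q(Q_j(b))`
for `j = 1, …, k`, there is a constant `Z > 0` with
`Z·(π_{k+1}(a))^{q−1} = (exp_q(∑_{j=1}^k Q_j(a)))^{q−1} + ∑_{j=2}^k (q−1)^j·e_j(Q₁(a),…,Q_k(a))`
for every `a`, where `e_j` is the j-th elementary symmetric polynomial. -/
theorem tsallisKL_policy_expansion {A : Type*} [Fintype A] [Nonempty A]
    (q : ℝ) (hq : 1 < q) (k : ℕ) (hk : 1 ≤ k)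
    (Q : ℕ → A → ℝ)
    (hQ : ∀ j, 1 ≤ j → j ≤ k → ∀ a, 0 < 1 + (q - 1) * Q j a)
    (hQsum : ∀ a, 0 ≤ 1 + (q - 1) * ∑ j ∈ Finset.Icc 1 k, Q j a)
    (p : ℕ → A → ℝ)
    (hinit : ∀ a, p 1 a = 1 / (Fintype.card A : ℝ))
    (hrec : ∀ j, 1 ≤ j → j ≤ k → ∀ a,
      p (j + 1) a = p j a * qexp q (Q j a) / ∑ b, p j b * qexp q (Q j b)) :
    ∃ Z : ℝ, 0 < Z ∧ ∀ a,
      Z * (p (k + 1) a) ^ (q - 1)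
        = (qexp q (∑ j ∈ Finset.Icc 1 k, Q j a)) ^ (q - 1)
          + ∑ j ∈ Finset.Icc 2 k, (q - 1) ^ j *
              ∑ t ∈ (Finset.Icc 1 k).powersetCard j, ∏ i ∈ t, Q i a :=
  tsallisKL_policy_expansion_general q hq k Q hQ hQsum p hinit hrec
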